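/- arXiv:0811.1357 — 3 statements merged into one kernel-verified Lean document; each statement's English description precedes it below -/
import Mathlib

section
/- (Algebraic content of Proposition 2: covariance of the vector covariant derivative.) Let Λ, V, dV, dΛ, ω ∈ ℂ⊗ℍ with Λ·Λ̄ = 1, and set ω' := Λ·ω·Λ̄ − dΛ·Λ̄. Define the Leibniz expansion d(ΛVΛ̄*) := dΛ·V·Λ̄* + Λ·dV·Λ̄* + Λ·V·(dΛ)‾* (using that the conjugations commute with the derivative, so ∂(Λ̄*) = (∂Λ)‾*). Then d(ΛVΛ̄*) + ω'·(Λ·V·Λ̄*) + (Λ·V·Λ̄*)·(ω'‾*) = Λ·(dV + ω·V + V·ω̄*)·Λ̄*. -/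
/-!
Since `Λ̄Λ = 1`, the transformed connection acts on `ΛX` by `ω'·ΛX = ΛωX − dΛ·X`. The map
`x ↦ x̄*` is an anti-automorphism, i.e. a ring homomorphism into the opposite ring, and there the
same identity reads `XΛ̄*·ω̄'* = Xω̄*Λ̄* − X·(dΛ)‾*`. The two `dΛ` terms so produced
cancel the outer terms of the Leibniz expansion, leaving `Λ(dV + ωV + Vω̄*)Λ̄*`.
-/

open scoped Quaternion

noncomputable section

/-- Componentwise complex conjugation `x ↦ x*` on the complexified quaternions `ℂ⊗ℍ`. -/
def cconj (x : ℍ[ℂ]) : ℍ[ℂ] :=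
  ⟨(starRingEnd ℂ) x.re, (starRingEnd ℂ) x.imI, (starRingEnd ℂ) x.imJ, (starRingEnd ℂ) x.imK⟩

/-- `x̄*`: quaternionic conjugation (the star operation, negating the three imaginary
components) followed by componentwise complex conjugation. -/
def barStar (x : ℍ[ℂ]) : ℍ[ℂ] := cconj (star x)

/-- The bilinear inner product `⟨x,y⟩ = (x·ȳ).re`, so that `2⟨x,y⟩ = x·ȳ + y·x̄`. -/
def ip (x y : ℍ[ℂ]) : ℂ := (x * star y).re

section GaugeTransform

variable {R S : Type*} [Ring R] [Ring S]

def gaugeTransform (Λ Λinv ω dΛ : R) : R := Λ * ω * Λinv - dΛ * Λinv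

theorem map_gaugeTransform (f : R →+* S) (Λ Λinv ω dΛ : R) :
    f (gaugeTransform Λ Λinv ω dΛ) = gaugeTransform (f Λ) (f Λinv) (f ω) (f dΛ) := by
  simp only [gaugeTransform, map_sub, map_mul]

theorem gaugeTransform_mul_left {Λ Λinv : R} (hΛ : Λinv * Λ = 1) (ω dΛ X : R) :
    gaugeTransform Λ Λinv ω dΛ * (Λ * X) = Λ * ω * X - dΛ * X := by
  calc gaugeTransform Λ Λinv ω dΛ * (Λ * X)
      = Λ * ω * (Λinv * Λ) * X - dΛ * (Λinv * Λ) * X := by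
        simp only [gaugeTransform]; noncomm_ring
    _ = Λ * ω * X - dΛ * X := by rw [hΛ]; noncomm_ring

theorem mul_unop_map_gaugeTransform (φ : R →+* Rᵐᵒᵖ) {Λ Λinv : R} (hΛ : Λinv * Λ = 1)
    (ω dΛ X : R) :
    X * (φ Λ).unop * (φ (gaugeTransform Λ Λinv ω dΛ)).unop
      = X * (φ ω).unop * (φ Λ).unop - X * (φ dΛ).unop := by
  have hφΛ : φ Λinv * φ Λ = 1 := by rw [← map_mul, hΛ, map_one]
  have h := congrArg MulOpposite.unop
    (gaugeTransform_mul_left hφΛ (φ ω) (φ dΛ) (MulOpposite.op X))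
  rw [← map_gaugeTransform] at h
  simpa only [MulOpposite.unop_mul, MulOpposite.unop_sub, MulOpposite.unop_op, mul_assoc]
    using h

theorem leibniz_add_gaugeTransform_eq {Λ Λinv : R} (φ : R →+* Rᵐᵒᵖ) (hΛ : Λinv * Λ = 1)
    (V dV dΛ ω : R) :
    (dΛ * V * (φ Λ).unop + Λ * dV * (φ Λ).unop + Λ * V * (φ dΛ).unop)
        + gaugeTransform Λ Λinv ω dΛ * (Λ * V * (φ Λ).unop)
        + (Λ * V * (φ Λ).unop) * (φ (gaugeTransform Λ Λinv ω dΛ)).unop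
      = Λ * (dV + ω * V + V * (φ ω).unop) * (φ Λ).unop := by
  have hL := gaugeTransform_mul_left hΛ ω dΛ (V * (φ Λ).unop)
  rw [← mul_assoc Λ V] at hL
  rw [hL, mul_unop_map_gaugeTransform φ hΛ]
  noncomm_ring

end GaugeTransform

@[simp] theorem re_cconj (x : ℍ[ℂ]) : (cconj x).re = starRingEnd ℂ x.re := rfl
@[simp] theorem imI_cconj (x : ℍ[ℂ]) : (cconj x).imI = starRingEnd ℂ x.imI := rfl
@[simp] theorem imJ_cconj (x : ℍ[ℂ]) : (cconj x).imJ = starRingEnd ℂ x.imJ := rfl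
@[simp] theorem imK_cconj (x : ℍ[ℂ]) : (cconj x).imK = starRingEnd ℂ x.imK := rfl

def cconjHom : ℍ[ℂ] →+* ℍ[ℂ] where
  toFun := cconj
  map_one' := by ext <;> simp
  map_mul' x y := by ext <;> simp
  map_zero' := by ext <;> simp
  map_add' x y := by ext <;> simp

/-- `x ↦ x̄*` as a ring homomorphism into the opposite ring; `(barStarHom x).unop = barStar x`
holds by `rfl`. -/
def barStarHom : ℍ[ℂ] →+* ℍ[ℂ]ᵐᵒᵖ := cconjHom.op.comp starRingEquiv.toRingHom

/-- Algebraic content of Proposition 2 (covariance of the vector covariant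
derivative): with `Λ·Λ̄ = 1` and `ω' = Λ·ω·Λ̄ − dΛ·Λ̄`, the Leibniz expansion of
`∂(ΛVΛ̄*)` plus the transformed connection terms equals `Λ·(∂V + ωV + Vω̄*)·Λ̄*`. -/
theorem stmt6 (Λ V dV dΛ ω ω' : ℍ[ℂ]) (hΛ : Λ * star Λ = 1)
    (hω' : ω' = Λ * ω * star Λ - dΛ * star Λ) :
    (dΛ * V * barStar Λ + Λ * dV * barStar Λ + Λ * V * barStar dΛ)
        + ω' * (Λ * V * barStar Λ) + (Λ * V * barStar Λ) * barStar ω'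
      = Λ * (dV + ω * V + V * barStar ω) * barStar Λ := by
  have hΛ' : star Λ * Λ = 1 := by rw [star_comm_self', hΛ]
  subst hω'
  exact leibniz_add_gaugeTransform_eq barStarHom hΛ' V dV dΛ ω
end
end

section
/- For all ω, x, y ∈ ℂ⊗ℍ one has the identity ⟨ω·x + x·ω̄*, y⟩ + ⟨x, ω·y + y·ω̄*⟩ = 2·⟨x,y⟩·⟨1, ω + ω̄*⟩, where ⟨1, ω + ω̄*⟩ equals the scalar component of ω + ω̄*. In particular, if Scal(ω + ω̄*) = 0, then ⟨ω·x + x·ω̄*, y⟩ + ⟨x, ω·y + y·ω̄*⟩ = 0. (This is the algebraic identity underlying metric compatibility, ∇_ρ g_{μν} = 0 and D_ρ g_{μν} = ∇_ρ g_{μν}, for the minimal connection.) -/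
open scoped Quaternion

noncomputable section

/-!
Proof idea: `ω + ω̄ = 2 Scal(ω)` is a scalar, and the scalar part is cyclic, `Scal(ab) = Scal(ba)`.
Hence `⟨ωx, y⟩ + ⟨x, ωy⟩ = Scal((ω + ω̄) x ȳ) = 2 Scal(ω) ⟨x, y⟩`, and likewise
`⟨xσ, y⟩ + ⟨x, yσ⟩ = Scal(x (σ + σ̄) ȳ) = 2 Scal(σ) ⟨x, y⟩`. Adding the two with `σ = ω̄*` gives the
identity, since `⟨1, z⟩ = Scal(z)`.
-/

namespace Quaternion

variable {R : Type*} [CommRing R]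

theorem re_mul_comm (a b : ℍ[R]) : (a * b).re = (b * a).re := by
  simp only [re_mul]
  ring

theorem re_mul_mul_star_add_re_mul_star_mul_left (ω x y : ℍ[R]) :
    (ω * x * star y).re + (x * star (ω * y)).re = 2 * ω.re * (x * star y).re := by
  rw [star_mul, ← mul_assoc, re_mul_comm (x * star y), mul_assoc, ← re_add, ← add_mul,
    self_add_star', coe_mul_eq_smul, re_smul, smul_eq_mul]

theorem re_mul_mul_star_add_re_mul_star_mul_right (σ x y : ℍ[R]) :
    (x * σ * star y).re + (x * star (y * σ)).re = 2 * σ.re * (x * star y).re := by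
  rw [star_mul, ← mul_assoc, ← re_add, ← add_mul, ← mul_add, self_add_star', mul_coe_eq_smul,
    smul_mul_assoc, re_smul, smul_eq_mul]

theorem re_mul_add_mul_mul_star_add_re_mul_star_mul_add_mul (ω σ x y : ℍ[R]) :
    ((ω * x + x * σ) * star y).re + (x * star (ω * y + y * σ)).re
      = 2 * (x * star y).re * (ω + σ).re := by
  have hω := re_mul_mul_star_add_re_mul_star_mul_left ω x y
  have hσ := re_mul_mul_star_add_re_mul_star_mul_right σ x y
  simp only [star_add, add_mul, mul_add, re_add] at *
  linear_combination hω + hσ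

end Quaternion

theorem ip_one_left (z : ℍ[ℂ]) : ip 1 z = z.re := by
  rw [ip, one_mul, Quaternion.re_star]

theorem ip_mul_add_mul_add_ip_mul_add_mul (ω σ x y : ℍ[ℂ]) :
    ip (ω * x + x * σ) y + ip x (ω * y + y * σ) = 2 * ip x y * ip 1 (ω + σ) := by
  rw [ip_one_left]
  exact Quaternion.re_mul_add_mul_mul_star_add_re_mul_star_mul_add_mul ω σ x y

/-- The algebraic identity underlying metric compatibility:
`⟨ω·x + x·ω̄*, y⟩ + ⟨x, ω·y + y·ω̄*⟩ = 2·⟨x,y⟩·⟨1, ω + ω̄*⟩`, where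
`⟨1, ω + ω̄*⟩ = Scal(ω + ω̄*)`; in particular the left-hand side vanishes
when `Scal(ω + ω̄*) = 0`. -/
theorem stmt12 (ω x y : ℍ[ℂ]) :
    ip (ω * x + x * barStar ω) y + ip x (ω * y + y * barStar ω)
      = 2 * ip x y * ip 1 (ω + barStar ω) ∧
    ip 1 (ω + barStar ω) = (ω + barStar ω).re ∧
    ((ω + barStar ω).re = 0 →
      ip (ω * x + x * barStar ω) y + ip x (ω * y + y * barStar ω) = 0) := by
  refine ⟨ip_mul_add_mul_add_ip_mul_add_mul ω (barStar ω) x y, ip_one_left _, fun h => ?_⟩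
  rw [ip_mul_add_mul_add_ip_mul_add_mul, ip_one_left, h, mul_zero]
end
end

section
/- The set {Λ ∈ ℂ⊗ℍ | Λ·Λ̄ = 1} is a group under quaternion multiplication, with identity element 1 and with the inverse of Λ given by Λ̄, and this group is isomorphic (as a group) to SL(2,ℂ), the special linear group of 2×2 complex matrices of determinant 1 — the double cover of the Lorentz group SO(3,1). -/
/-!
Sending the quaternion units `i, j, k` to `iσ₃, iσ₂, iσ₁` (Pauli matrices) respects the defining
relations `i² = j² = -1`, `ij = -ji = k`, so it extends to an algebra isomorphism
`ℂ ⊗ ℍ ≃ M₂(ℂ)`. Under it `Λ Λ̄ = normSq Λ` becomes the determinant, so the unit-norm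
complexified quaternions correspond exactly to `SL(2, ℂ)`. The group structure of the set is
quaternion multiplication and conjugation by construction.
-/

open scoped Quaternion

noncomputable section

/-- The set `{Λ ∈ ℂ⊗ℍ | Λ·Λ̄ = 1}` of complexified quaternions of unit norm,
where `Λ̄` is quaternionic conjugation (the star operation). -/
def Sp1 : Type := {Λ : ℍ[ℂ] // Λ * star Λ = 1}

/-- `{Λ ∈ ℂ⊗ℍ | Λ·Λ̄ = 1}` is a group under quaternion multiplication, with
identity element `1` and the inverse of `Λ` given by `Λ̄`. -/
instance : Group Sp1 where
  mul a b := ⟨a.1 * b.1, by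
    rw [star_mul, mul_assoc, ← mul_assoc b.1, b.2, one_mul, a.2]⟩
  one := ⟨1, by simp⟩
  inv a := ⟨star a.1, by rw [star_star, star_comm_self', a.2]⟩
  mul_assoc a b c := Subtype.ext (mul_assoc a.1 b.1 c.1)
  one_mul a := Subtype.ext (one_mul a.1)
  mul_one a := Subtype.ext (mul_one a.1)
  inv_mul_cancel a := Subtype.ext (by
    show star a.1 * a.1 = 1
    rw [star_comm_self', a.2])

open Complex Matrix Quaternion

theorem Quaternion.mul_star_eq_one_iff {R : Type*} [CommRing R] (x : ℍ[R]) :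
    x * star x = 1 ↔ normSq x = 1 := by
  rw [self_mul_star, ← coe_one, coe_inj]

def pauliBasis : QuaternionAlgebra.Basis (Matrix (Fin 2) (Fin 2) ℂ) (-1 : ℂ) 0 (-1) where
  i := !![I, 0; 0, -I]
  j := !![0, 1; -1, 0]
  k := !![0, I; I, 0]
  i_mul_i := by ext i j; fin_cases i <;> fin_cases j <;> simp
  j_mul_j := by ext i j; fin_cases i <;> fin_cases j <;> simp
  i_mul_j := by ext i j; fin_cases i <;> fin_cases j <;> simp
  j_mul_i := by ext i j; fin_cases i <;> fin_cases j <;> simp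

def quaternionToMatrix : ℍ[ℂ] →ₐ[ℂ] Matrix (Fin 2) (Fin 2) ℂ := pauliBasis.liftHom

theorem quaternionToMatrix_apply (x : ℍ[ℂ]) :
    quaternionToMatrix x =
      !![x.re + x.imI * I, x.imJ + x.imK * I; -x.imJ + x.imK * I, x.re - x.imI * I] := by
  -- `ℍ[ℂ]` is `ℍ[ℂ,-1,0,-1]` only up to unfolding, so `liftHom_apply` does not rewrite here.
  change algebraMap ℂ _ x.re + x.imI • pauliBasis.i + x.imJ • pauliBasis.j +
    x.imK • pauliBasis.k = _
  rw [Algebra.algebraMap_eq_smul_one]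
  ext i j
  fin_cases i <;> fin_cases j <;> simp [pauliBasis, sub_eq_add_neg]

theorem det_quaternionToMatrix (x : ℍ[ℂ]) : (quaternionToMatrix x).det = normSq x := by
  rw [quaternionToMatrix_apply, det_fin_two_of, normSq_def']
  linear_combination (-(x.imI ^ 2) - x.imK ^ 2) * I_sq

def matrixToQuaternion (M : Matrix (Fin 2) (Fin 2) ℂ) : ℍ[ℂ] :=
  ⟨(M 0 0 + M 1 1) / 2, -I * (M 0 0 - M 1 1) / 2, (M 0 1 - M 1 0) / 2, -I * (M 0 1 + M 1 0) / 2⟩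

theorem matrixToQuaternion_quaternionToMatrix (x : ℍ[ℂ]) :
    matrixToQuaternion (quaternionToMatrix x) = x := by
  rw [quaternionToMatrix_apply]
  ext <;> simp [matrixToQuaternion] <;> ring_nf <;> simp only [I_sq] <;> ring

theorem quaternionToMatrix_matrixToQuaternion (M : Matrix (Fin 2) (Fin 2) ℂ) :
    quaternionToMatrix (matrixToQuaternion M) = M := by
  rw [quaternionToMatrix_apply]
  ext i j
  fin_cases i <;> fin_cases j <;>
    simp [matrixToQuaternion] <;> ring_nf <;> simp only [I_sq] <;> ring

def Sp1.mulEquivSL : Sp1 ≃* SpecialLinearGroup (Fin 2) ℂ where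
  toFun x := ⟨quaternionToMatrix x.1, by
    rw [det_quaternionToMatrix, ← mul_star_eq_one_iff]
    exact x.2⟩
  invFun M := ⟨matrixToQuaternion M, by
    rw [mul_star_eq_one_iff, ← det_quaternionToMatrix, quaternionToMatrix_matrixToQuaternion]
    exact M.2⟩
  left_inv x := Subtype.ext (matrixToQuaternion_quaternionToMatrix x.1)
  right_inv M := Subtype.ext (quaternionToMatrix_matrixToQuaternion M)
  map_mul' x y := Subtype.ext (map_mul quaternionToMatrix x.1 y.1)

/-- The group `{Λ ∈ ℂ⊗ℍ | Λ·Λ̄ = 1}` — with multiplication the quaternion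
multiplication, identity `1`, and inverse `Λ ↦ Λ̄` — is isomorphic to `SL(2,ℂ)`,
the double cover of the Lorentz group `SO(3,1)`. -/
theorem stmt16 :
    (∀ a b : Sp1, (a * b).1 = a.1 * b.1) ∧
    ((1 : Sp1)).1 = 1 ∧
    (∀ a : Sp1, (a⁻¹).1 = star a.1) ∧
    Nonempty (Sp1 ≃* Matrix.SpecialLinearGroup (Fin 2) ℂ) :=
  ⟨fun _ _ => rfl, rfl, fun _ => rfl, ⟨Sp1.mulEquivSL⟩⟩
end
end
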